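/- arXiv:1101.1688 — 7 statements merged into one kernel-verified Lean document; each statement's English description precedes it below -/
import Mathlib

section
/- For all real h with h ≠ 0 and any real g, the rate R = max(0, (1/2)·log₂((1+h²+g²)·h²/(h²+g²))) satisfies R ≥ max(0, (1/2)·log₂(h²)), and moreover (1/2)·log₂(1+h²) − R ≤ 1/2. That is, the dirty-paper achievable rate obtained from the auxiliary variable U = hX + gS is within half a bit of the capacity (1/2)·log₂(1+h²). -/
/-! Since `(1 + h² + g²) h² ≥ (h² + g²) h²`, the rate `R` dominates `max 0 (½ log₂ h²)`, and
`1 + h² ≤ 2 max 1 h²` puts the capacity `½ log₂ (1 + h²)` within half a bit of that. -/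

open Real

lemma le_one_add_add_mul_div_add {a b : ℝ} (ha : 0 < a) (hb : 0 ≤ b) :
    a ≤ (1 + a + b) * a / (a + b) := by
  rw [le_div_iff₀ (by positivity)]
  nlinarith

lemma max_zero_half_logb_le_of_le {x y : ℝ} (hx : 0 < x) (hxy : x ≤ y) :
    max 0 (1/2 * logb 2 x) ≤ max 0 (1/2 * logb 2 y) := by
  gcongr
  norm_num

lemma half_logb_two_one_add_le {a : ℝ} (ha : 0 ≤ a) :
    1/2 * logb 2 (1 + a) ≤ 1/2 + max 0 (1/2 * logb 2 a) := by
  rcases le_or_gt a 1 with ha1 | ha1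
  · have : logb 2 (1 + a) ≤ logb 2 2 := logb_le_logb_of_le (by norm_num) (by linarith) (by linarith)
    rw [logb_self_eq_one one_lt_two] at this
    linarith [le_max_left (0 : ℝ) (1/2 * logb 2 a)]
  · have : logb 2 (1 + a) ≤ logb 2 (2 * a) := logb_le_logb_of_le (by norm_num) (by linarith) (by linarith)
    rw [logb_mul two_ne_zero (by positivity), logb_self_eq_one one_lt_two] at this
    linarith [le_max_right (0 : ℝ) (1/2 * logb 2 a)]

theorem stmt_0 (h g : ℝ) (hh : h ≠ 0) :
    max 0 ((1/2) * Real.logb 2 ((1 + h^2 + g^2) * h^2 / (h^2 + g^2)))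
      ≥ max 0 ((1/2) * Real.logb 2 (h^2)) ∧
    (1/2) * Real.logb 2 (1 + h^2)
      - max 0 ((1/2) * Real.logb 2 ((1 + h^2 + g^2) * h^2 / (h^2 + g^2))) ≤ 1/2 := by
  have hR : max 0 (1/2 * logb 2 (h^2))
      ≤ max 0 (1/2 * logb 2 ((1 + h^2 + g^2) * h^2 / (h^2 + g^2))) :=
    max_zero_half_logb_le_of_le (by positivity)
      (le_one_add_add_mul_div_add (by positivity) (sq_nonneg g))
  refine ⟨hR, ?_⟩
  linarith [half_logb_two_one_add_le (sq_nonneg h)]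
end

section
/- Let A and B be matrices over GF(2) with the same number of columns, and let Z be a uniformly distributed random vector over GF(2)^k (where k is the common number of columns). Then the conditional entropy H(AZ | BZ) equals rank([A; B]) − rank(B), where [A; B] denotes the vertical stack of A on top of B, and entropy is measured in bits. -/
open Finset in
/-- Shannon entropy (in bits) of the random variable `f` of a random element of `α`
distributed according to the probability mass function `p`. -/
noncomputable def distEnt {α β : Type*} [Fintype α] [Fintype β] [DecidableEq β]
    (p : α → ℝ) (f : α → β) : ℝ :=
  -∑ b : β, (∑ z ∈ univ.filter (fun z => f z = b), p z) *
      Real.logb 2 (∑ z ∈ univ.filter (fun z => f z = b), p z)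

/-- Conditional Shannon entropy (in bits) `H(f | g)` via the chain rule. -/
noncomputable def condEnt {α β γ : Type*} [Fintype α] [Fintype β] [Fintype γ]
    [DecidableEq β] [DecidableEq γ] (p : α → ℝ) (f : α → β) (g : α → γ) : ℝ :=
  distEnt p (fun z => (f z, g z)) - distEnt p g

/-!
For `Z` uniform on a finite group and `f` a homomorphism, all nonempty fibres of `f` have the
same size, so `f Z` is uniform on the image of `f` and its entropy is `log₂ #(image f)`.
For a linear map over a finite field `K` the image has `#K ^ rank` elements, and `(AZ, BZ)` is
the image of `Z` under the stacked matrix `[A; B]`; the chain rule then gives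
`rank [A; B] - rank B`.
-/

open Finset

section Entropy

variable {α β : Type*} [Fintype α] [Fintype β] [DecidableEq β]

lemma distEnt_comp_equiv {γ : Type*} [Fintype γ] [DecidableEq γ]
    (p : α → ℝ) (f : α → β) (e : β ≃ γ) :
    distEnt p (e ∘ f) = distEnt p f := by
  unfold distEnt
  rw [← e.sum_comp]
  simp only [Function.comp_apply, e.apply_eq_iff_eq]

lemma distEnt_eq_logb_card_of_uniformOn (p : α → ℝ) (f : α → β) (t : Finset β)
    (hp : ∀ b, ∑ z ∈ univ.filter (fun z => f z = b), p z = if b ∈ t then (#t : ℝ)⁻¹ else 0) :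
    distEnt p f = Real.logb 2 #t := by
  unfold distEnt
  simp only [hp, apply_ite (fun x : ℝ => x * Real.logb 2 x), zero_mul, sum_ite_mem, univ_inter,
    sum_const, nsmul_eq_mul, Real.logb_inv]
  rcases eq_or_ne (#t : ℝ) 0 with ht | ht
  · simp [ht]
  · field_simp

end Entropy

section Homomorphism

variable {G M F : Type*} [AddGroup G] [Fintype G] [AddMonoid M] [DecidableEq M]
  [FunLike F G M] [AddMonoidHomClass F G M]

lemma card_image_mul_card_fiber (f : F) {b : M} (hb : b ∈ univ.image f) :
    #(univ.image f) * #{g | f g = b} = Fintype.card G := by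
  rw [← card_univ, card_eq_sum_card_image f univ, ← smul_eq_mul, ← sum_const]
  refine sum_congr rfl fun c hc => ?_
  simp only [mem_image, mem_univ, true_and] at hb hc
  exact AddMonoidHom.card_fiber_eq_of_mem_range f hb hc

lemma sum_fiber_uniform (f : F) (b : M) :
    ∑ _g ∈ univ.filter (fun g => f g = b), (1 : ℝ) / Fintype.card G
      = if b ∈ univ.image f then (#(univ.image f) : ℝ)⁻¹ else 0 := by
  split_ifs with hb
  · have hfiber : (#{g | f g = b} : ℝ) ≠ 0 := by
      obtain ⟨g, -, rfl⟩ := mem_image.1 hb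
      exact Nat.cast_ne_zero.2 (card_ne_zero_of_mem (a := g) (by simp))
    rw [sum_const, nsmul_eq_mul, ← card_image_mul_card_fiber f hb, Nat.cast_mul]
    field_simp
  · refine sum_eq_zero fun g hg => absurd ?_ hb
    exact mem_image.2 ⟨g, mem_univ g, (mem_filter.1 hg).2⟩

lemma distEnt_uniform_eq_logb_card_image [Fintype M] (f : F) :
    distEnt (fun _ : G => (1 : ℝ) / Fintype.card G) f = Real.logb 2 #(univ.image f) :=
  distEnt_eq_logb_card_of_uniformOn _ _ _ (sum_fiber_uniform f)

end Homomorphism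

lemma LinearMap.card_image_eq_pow_finrank_range {K V W : Type*} [Field K] [Fintype K]
    [AddCommGroup V] [Module K V] [Fintype V] [AddCommGroup W] [Module K W] [DecidableEq W]
    (f : V →ₗ[K] W) :
    #(univ.image f) = Fintype.card K ^ Module.finrank K (LinearMap.range f) := by
  rw [← Module.card_eq_pow_finrank, ← Set.toFinset_range, Set.toFinset_card]
  exact Fintype.card_congr (Equiv.setCongr (LinearMap.coe_range f).symm)

lemma Matrix.distEnt_mulVec_uniform {m n K : Type*} [Fintype m] [Fintype n] [DecidableEq m]
    [DecidableEq n] [Field K] [Fintype K] [DecidableEq K] (M : Matrix m n K) :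
    distEnt (fun _ : n → K => (1 : ℝ) / Fintype.card (n → K)) M.mulVec
      = M.rank * Real.logb 2 (Fintype.card K) := by
  rw [← Real.logb_pow, ← Nat.cast_pow, Matrix.rank, ← LinearMap.card_image_eq_pow_finrank_range]
  exact distEnt_uniform_eq_logb_card_image M.mulVecLin

/-- for `Z` uniform on `GF(2)^k`,
`H(AZ | BZ) = rank [A;B] − rank B` (in bits). -/
theorem stmt_2 {p r k : ℕ} (A : Matrix (Fin p) (Fin k) (ZMod 2))
    (B : Matrix (Fin r) (Fin k) (ZMod 2)) :
    condEnt (fun _ : Fin k → ZMod 2 => (1 : ℝ) / Fintype.card (Fin k → ZMod 2))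
        (fun z => A.mulVec z) (fun z => B.mulVec z)
      = ((Matrix.fromRows A B).rank : ℝ) - (B.rank : ℝ) := by
  have hpair : (fun z => (A.mulVec z, B.mulVec z))
      = Equiv.sumArrowEquivProdArrow (Fin p) (Fin r) (ZMod 2) ∘ (Matrix.fromRows A B).mulVec := by
    funext z
    simp [Equiv.sumArrowEquivProdArrow, Matrix.fromRows_mulVec]
  rw [condEnt, hpair, distEnt_comp_equiv, Matrix.distEnt_mulVec_uniform,
    Matrix.distEnt_mulVec_uniform, ZMod.card, Nat.cast_ofNat, Real.logb_self_eq_one one_lt_two,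
    mul_one, mul_one]
end

section
/- Let A and B be matrices over GF(2) with the same number of columns k. For every GF(2)-valued random vector Z of length k, the conditional entropy H(AZ | BZ) ≤ rank([A; B]) − rank(B), with equality when Z is uniform on GF(2)^k. Hence max over all distributions of Z of H(AZ|BZ) equals rank([A; B]) − rank(B). -/
/-!
For a homomorphism `f` of finite groups, the uniform distribution on the domain is pushed forward
to the uniform distribution on `range f`, so for uniform `Z` the chain rule gives
`H(AZ | BZ) = log |range (A, B)| - log |range B|`. For an arbitrary distribution, once `BZ = c`
is fixed, `AZ` takes exactly `|range (A, B)| / |range B|` values (a fibre of `B` is a union of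
equally large fibres of `(A, B)`), and Jensen's inequality for `log` bounds the conditional
entropy by the logarithm of that count. Over `GF(2)`, `|range M| = 2 ^ rank M`.
-/

open Finset Real

lemma sum_mul_logb_div_le_logb_sum {ι : Type*} (s : Finset ι) (q x : ι → ℝ)
    (hq : ∀ i ∈ s, 0 < q i) (hx : ∀ i ∈ s, 0 < x i) (hq1 : ∑ i ∈ s, q i = 1) :
    ∑ i ∈ s, q i * logb 2 (x i / q i) ≤ logb 2 (∑ i ∈ s, x i) := by
  have jensen := strictConcaveOn_log_Ioi.concaveOn.le_map_sum (t := s) (w := q)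
    (p := fun i => x i / q i) (fun i hi => (hq i hi).le) hq1
    (fun i hi => div_pos (hx i hi) (hq i hi))
  simp only [smul_eq_mul, sum_congr rfl fun i hi => mul_div_cancel₀ (x i) (hq i hi).ne'] at jensen
  simp only [logb, mul_div_assoc', ← sum_div]
  exact div_le_div_of_nonneg_right jensen (log_pos one_lt_two).le

section Entropy

variable {α β γ : Type*} [Fintype α] [DecidableEq β] [DecidableEq γ]

def pushforward (p : α → ℝ) (f : α → β) (b : β) : ℝ :=
  ∑ z ∈ univ.filter (fun z => f z = b), p z

lemma pushforward_nonneg {p : α → ℝ} (hp : ∀ z, 0 ≤ p z) (f : α → β) (b : β) :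
    0 ≤ pushforward p f b :=
  sum_nonneg fun z _ => hp z

lemma exists_apply_eq_of_pushforward_ne_zero {p : α → ℝ} {f : α → β} {b : β}
    (h : pushforward p f b ≠ 0) : ∃ z, f z = b := by
  obtain ⟨z, hz, -⟩ := exists_ne_zero_of_sum_ne_zero h
  exact ⟨z, (mem_filter.mp hz).2⟩

variable [Fintype β]

lemma distEnt_eq_neg_sum_pushforward (p : α → ℝ) (f : α → β) :
    distEnt p f = -∑ b, pushforward p f b * logb 2 (pushforward p f b) := rfl

lemma sum_pushforward (p : α → ℝ) (f : α → β) : ∑ b, pushforward p f b = ∑ z, p z :=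
  sum_fiberwise_of_maps_to (fun z _ => mem_univ (f z)) p

lemma sum_pushforward_prodMk (p : α → ℝ) (f : α → β) (g : α → γ) (c : γ) :
    ∑ b, pushforward p (fun z => (f z, g z)) (b, c) = pushforward p g c := by
  have := sum_fiberwise_of_maps_to (s := univ.filter (fun z => g z = c)) (t := univ)
    (fun z _ => mem_univ (f z)) p
  simp only [filter_filter] at this
  simpa [pushforward, and_comm] using this

lemma pushforward_prodMk_le {p : α → ℝ} (hp : ∀ z, 0 ≤ p z) (f : α → β) (g : α → γ) (b : β)
    (c : γ) : pushforward p (fun z => (f z, g z)) (b, c) ≤ pushforward p g c := by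
  rw [← sum_pushforward_prodMk p f g c]
  exact single_le_sum (f := fun b => pushforward p (fun z => (f z, g z)) (b, c))
    (fun b _ => pushforward_nonneg hp _ _) (mem_univ b)

variable [Fintype γ]

lemma condEnt_eq_sum_mul_logb_div {p : α → ℝ} (hp : ∀ z, 0 ≤ p z) (f : α → β) (g : α → γ) :
    condEnt p f g = ∑ bc ∈ univ.filter (fun bc => 0 < pushforward p (fun z => (f z, g z)) bc),
      pushforward p (fun z => (f z, g z)) bc *
        logb 2 (pushforward p g bc.2 / pushforward p (fun z => (f z, g z)) bc) := by
  set q := pushforward p (fun z => (f z, g z))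
  set m := pushforward p g
  have hm : ∑ c, m c * logb 2 (m c) = ∑ bc, q bc * logb 2 (m bc.2) := by
    rw [Fintype.sum_prod_type_right]
    refine sum_congr rfl fun c _ => ?_
    simp only [← sum_mul, q, m, sum_pushforward_prodMk]
  have hsplit : condEnt p f g = ∑ bc, q bc * (logb 2 (m bc.2) - logb 2 (q bc)) := by
    rw [condEnt, distEnt_eq_neg_sum_pushforward, distEnt_eq_neg_sum_pushforward, hm]
    simp only [mul_sub, sum_sub_distrib]
    ring
  rw [hsplit, sum_filter_of_ne fun bc _ h => ?_]
  · refine sum_congr rfl fun bc _ => ?_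
    obtain hq0 | hqpos := (pushforward_nonneg hp (fun z => (f z, g z)) bc).eq_or_lt'
    · simp [q, hq0]
    have hmpos : 0 < m bc.2 := hqpos.trans_le (pushforward_prodMk_le hp f g bc.1 bc.2)
    rw [logb_div hmpos.ne' hqpos.ne']
  · exact (pushforward_nonneg hp _ bc).lt_of_ne' (left_ne_zero_of_mul h)

theorem condEnt_le_logb_of_card_image_le {p : α → ℝ} (hp : ∀ z, 0 ≤ p z) (hp1 : ∑ z, p z = 1)
    (f : α → β) (g : α → γ) {N : ℝ}
    (hN : ∀ c, (#((univ.filter fun z => g z = c).image f) : ℝ) ≤ N) :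
    condEnt p f g ≤ logb 2 N := by
  set q := pushforward p (fun z => (f z, g z))
  set m := pushforward p g
  set S := univ.filter fun bc => 0 < q bc
  have hqS : ∑ bc ∈ S, q bc = 1 := by
    rw [sum_filter_of_ne fun bc _ h => (pushforward_nonneg hp _ bc).lt_of_ne' h, sum_pushforward,
      hp1]
  have hqm : ∀ bc, q bc ≤ m bc.2 := fun bc => pushforward_prodMk_le hp f g bc.1 bc.2
  have hmS : ∑ bc ∈ S, m bc.2 ≤ N := by
    calc ∑ bc ∈ S, m bc.2
        = ∑ c, ∑ b, if 0 < q (b, c) then m c else 0 := by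
          rw [sum_filter, Fintype.sum_prod_type_right]
      _ ≤ ∑ c, ∑ b, if b ∈ (univ.filter fun z => g z = c).image f then m c else 0 := by
          gcongr with c _ b _
          split_ifs with hq hb hb
          · exact le_rfl
          · obtain ⟨z, hz⟩ := exists_apply_eq_of_pushforward_ne_zero hq.ne'
            simp only [Prod.mk.injEq] at hz
            exact absurd (mem_image.mpr ⟨z, mem_filter.mpr ⟨mem_univ z, hz.2⟩, hz.1⟩) hb
          · exact pushforward_nonneg hp g c
          · exact le_rfl
      _ ≤ ∑ c, N * m c := by
          gcongr with c _
          rw [sum_ite_mem, univ_inter, sum_const, nsmul_eq_mul]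
          exact mul_le_mul_of_nonneg_right (hN c) (pushforward_nonneg hp g c)
      _ = N := by rw [← mul_sum, sum_pushforward, hp1, mul_one]
  have hmS_pos : 0 < ∑ bc ∈ S, m bc.2 := one_pos.trans_le (hqS ▸ sum_le_sum fun bc _ => hqm bc)
  calc condEnt p f g = ∑ bc ∈ S, q bc * logb 2 (m bc.2 / q bc) := condEnt_eq_sum_mul_logb_div hp f g
    _ ≤ logb 2 (∑ bc ∈ S, m bc.2) := sum_mul_logb_div_le_logb_sum S q (fun bc => m bc.2)
          (fun bc hbc => (mem_filter.mp hbc).2)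
          (fun bc hbc => (mem_filter.mp hbc).2.trans_le (hqm bc)) hqS
    _ ≤ logb 2 N := logb_le_logb_of_le one_lt_two hmS_pos hmS

end Entropy

section AddGroup

variable {G M N : Type*} [AddGroup G] [Fintype G] [AddGroup M] [AddGroup N]

lemma natCard_range_pos (f : G →+ M) : 0 < Nat.card (Set.range f) :=
  Nat.card_pos_iff.mpr ⟨⟨⟨0, 0, map_zero f⟩⟩, Set.finite_range f⟩

variable [DecidableEq M] [DecidableEq N]

lemma card_fiber_mul_natCard_range (f : G →+ M) {b : M} (hb : b ∈ Set.range f) :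
    #(univ.filter fun z => f z = b) * Nat.card (Set.range f) = Fintype.card G := by
  have hker : #(univ.filter fun z => f z = 0) = Nat.card f.ker := by
    rw [← Fintype.card_subtype, ← Nat.card_eq_fintype_card]
    exact Nat.card_congr (Equiv.subtypeEquivRight fun z => f.mem_ker.symm)
  have hrange : Nat.card (Set.range f) = Nat.card f.range := by rw [← AddMonoidHom.coe_range]; rfl
  rw [AddMonoidHom.card_fiber_eq_of_mem_range f hb ⟨0, map_zero f⟩, hker, hrange,
    ← AddSubgroup.index_ker, AddSubgroup.card_mul_index, Nat.card_eq_fintype_card]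

lemma pushforward_uniform (f : G →+ M) (b : M) :
    pushforward (fun _ => (1 : ℝ) / Fintype.card G) f b =
      if b ∈ Set.range f then (1 : ℝ) / Nat.card (Set.range f) else 0 := by
  rw [pushforward, sum_const, nsmul_eq_mul]
  split_ifs with hb
  · have h := card_fiber_mul_natCard_range f hb
    obtain ⟨hfiber, hrange⟩ := Nat.mul_ne_zero_iff.mp (h ▸ Fintype.card_ne_zero)
    rw [← h]
    push_cast
    field_simp
  · rw [filter_false_of_mem fun z _ hz => hb ⟨z, hz⟩, card_empty, Nat.cast_zero, zero_mul]

lemma distEnt_uniform_eq_logb_natCard_range (f : G →+ M) [Fintype M] :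
    distEnt (fun _ => (1 : ℝ) / Fintype.card G) f = logb 2 (Nat.card (Set.range f)) := by
  rw [distEnt_eq_neg_sum_pushforward]
  have hR : (Nat.card (Set.range f) : ℝ) ≠ 0 := Nat.cast_ne_zero.mpr (natCard_range_pos f).ne'
  have hterm : ∀ b, pushforward (fun _ => (1 : ℝ) / Fintype.card G) f b *
      logb 2 (pushforward (fun _ => (1 : ℝ) / Fintype.card G) f b) =
      if b ∈ Set.range f then (1 / Nat.card (Set.range f)) * logb 2 (1 / Nat.card (Set.range f))
      else 0 := by
    intro b
    rw [pushforward_uniform]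
    split_ifs <;> simp
  rw [sum_congr rfl fun b _ => hterm b, sum_ite, sum_const_zero, add_zero, sum_const,
    nsmul_eq_mul, Set.filter_mem_univ_eq_toFinset, ← Nat.card_eq_card_toFinset, one_div,
    logb_inv]
  field_simp

lemma card_image_fiber_mul_natCard_range (f : G →+ M) (g : G →+ N) {c : N}
    (hc : c ∈ Set.range g) :
    #((univ.filter fun z => g z = c).image f) * Nat.card (Set.range g) =
      Nat.card (Set.range (f.prod g)) := by
  obtain ⟨z₀, rfl⟩ := hc
  set I := (univ.filter fun z => g z = g z₀).image f
  set F := #(univ.filter fun z => f.prod g z = f.prod g z₀)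
  -- The fibre of `g` over `g z₀` splits into `#I` fibres of `f.prod g`, all of the same size.
  have hfiber : ∀ b ∈ I, #(univ.filter fun z => f.prod g z = (b, g z₀)) = F := by
    intro b hb
    obtain ⟨z, hz, rfl⟩ := mem_image.mp hb
    refine AddMonoidHom.card_fiber_eq_of_mem_range _ ⟨z, ?_⟩ ⟨z₀, rfl⟩
    simp [(mem_filter.mp hz).2]
  have hg : #(univ.filter fun z => g z = g z₀) = #I * F := by
    rw [card_eq_sum_card_image f, ← smul_eq_mul, ← sum_const]
    refine sum_congr rfl fun b hb => ?_
    rw [← hfiber b hb, filter_filter]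
    simp [and_comm]
  have hF : 0 < F := card_pos.mpr ⟨z₀, mem_filter.mpr ⟨mem_univ _, rfl⟩⟩
  have h := card_fiber_mul_natCard_range g ⟨z₀, rfl⟩
  rw [hg, ← card_fiber_mul_natCard_range (f.prod g) ⟨z₀, rfl⟩] at h
  exact Nat.eq_of_mul_eq_mul_left hF (by rw [← h]; ring)

variable [Fintype M] [Fintype N]

theorem condEnt_le_logb_natCard_range_sub {p : G → ℝ} (hp : ∀ z, 0 ≤ p z) (hp1 : ∑ z, p z = 1)
    (f : G →+ M) (g : G →+ N) :
    condEnt p f g ≤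
      logb 2 (Nat.card (Set.range (f.prod g))) - logb 2 (Nat.card (Set.range g)) := by
  have hJ : (0 : ℝ) < Nat.card (Set.range (f.prod g)) := Nat.cast_pos.mpr (natCard_range_pos _)
  have hg : (0 : ℝ) < Nat.card (Set.range g) := Nat.cast_pos.mpr (natCard_range_pos g)
  rw [← logb_div hJ.ne' hg.ne']
  refine condEnt_le_logb_of_card_image_le hp hp1 f g fun c => ?_
  by_cases hc : c ∈ Set.range g
  · rw [le_div_iff₀ hg, ← Nat.cast_mul, card_image_fiber_mul_natCard_range f g hc]
  · rw [filter_false_of_mem fun z _ hz => hc ⟨z, hz⟩, image_empty, card_empty, Nat.cast_zero]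
    positivity

theorem condEnt_uniform_eq_logb_natCard_range_sub (f : G →+ M) (g : G →+ N) :
    condEnt (fun _ => (1 : ℝ) / Fintype.card G) f g =
      logb 2 (Nat.card (Set.range (f.prod g))) - logb 2 (Nat.card (Set.range g)) :=
  congrArg₂ (· - ·) (distEnt_uniform_eq_logb_natCard_range (f.prod g))
    (distEnt_uniform_eq_logb_natCard_range g)

end AddGroup

namespace Matrix

variable {m n : Type*} [Fintype n]

lemma natCard_range_mulVec {K : Type*} [Field K] [Finite K] (M : Matrix m n K) :
    Nat.card (Set.range M.mulVec) = Nat.card K ^ M.rank := by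
  rw [rank, ← Module.natCard_eq_pow_finrank]
  rfl

lemma logb_two_natCard_range_mulVec (M : Matrix m n (ZMod 2)) :
    logb 2 (Nat.card (Set.range M.mulVec)) = M.rank := by
  rw [natCard_range_mulVec, Nat.card_zmod, Nat.cast_pow, Nat.cast_ofNat, logb_pow,
    logb_self_eq_one one_lt_two, mul_one]

lemma natCard_range_prod_mulVecLin {l R : Type*} [CommRing R] (A : Matrix m n R)
    (B : Matrix l n R) :
    Nat.card (Set.range (A.mulVecLin.toAddMonoidHom.prod B.mulVecLin.toAddMonoidHom)) =
      Nat.card (Set.range (fromRows A B).mulVec) := by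
  have h : ⇑(A.mulVecLin.toAddMonoidHom.prod B.mulVecLin.toAddMonoidHom) =
      Equiv.sumArrowEquivProdArrow m l R ∘ (fromRows A B).mulVec := by
    funext z
    rw [Function.comp_apply, fromRows_mulVec]
    rfl
  rw [h, Set.range_comp, Nat.card_image_of_injective (Equiv.injective _)]

end Matrix

/-- for every distribution of `Z` on `GF(2)^k`,
`H(AZ | BZ) ≤ rank [A;B] − rank B`, with equality for uniform `Z`; hence the
maximum over all distributions equals `rank [A;B] − rank B`. -/
theorem stmt_3 {p r k : ℕ} (A : Matrix (Fin p) (Fin k) (ZMod 2))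
    (B : Matrix (Fin r) (Fin k) (ZMod 2)) :
    (∀ μ : (Fin k → ZMod 2) → ℝ, (∀ z, 0 ≤ μ z) → (∑ z, μ z) = 1 →
        condEnt μ (fun z => A.mulVec z) (fun z => B.mulVec z)
          ≤ ((Matrix.fromRows A B).rank : ℝ) - (B.rank : ℝ)) ∧
    condEnt (fun _ : Fin k → ZMod 2 => (1 : ℝ) / Fintype.card (Fin k → ZMod 2))
        (fun z => A.mulVec z) (fun z => B.mulVec z)
      = ((Matrix.fromRows A B).rank : ℝ) - (B.rank : ℝ) ∧
    IsGreatest {h : ℝ | ∃ μ : (Fin k → ZMod 2) → ℝ, (∀ z, 0 ≤ μ z) ∧ (∑ z, μ z) = 1 ∧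
        h = condEnt μ (fun z => A.mulVec z) (fun z => B.mulVec z)}
      (((Matrix.fromRows A B).rank : ℝ) - (B.rank : ℝ)) := by
  set f := A.mulVecLin.toAddMonoidHom
  set g := B.mulVecLin.toAddMonoidHom
  have hrank : logb 2 (Nat.card (Set.range (f.prod g))) - logb 2 (Nat.card (Set.range g)) =
      ((Matrix.fromRows A B).rank : ℝ) - (B.rank : ℝ) := by
    congr 1
    · rw [Matrix.natCard_range_prod_mulVecLin, Matrix.logb_two_natCard_range_mulVec]
    · exact Matrix.logb_two_natCard_range_mulVec B
  have hle : ∀ μ : (Fin k → ZMod 2) → ℝ, (∀ z, 0 ≤ μ z) → (∑ z, μ z) = 1 →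
      condEnt μ (fun z => A.mulVec z) (fun z => B.mulVec z)
        ≤ ((Matrix.fromRows A B).rank : ℝ) - (B.rank : ℝ) :=
    fun μ h0 h1 => hrank ▸ condEnt_le_logb_natCard_range_sub h0 h1 f g
  have heq := hrank ▸ condEnt_uniform_eq_logb_natCard_range_sub f g
  refine ⟨hle, heq, ⟨_, fun _ => by positivity, ?_, heq.symm⟩, ?_⟩
  · simp
  · rintro h ⟨μ, h0, h1, rfl⟩
    exact hle μ h0 h1
end

section
/- Let D be the q×q down-shift matrix over GF(2), and let 0 ≤ n₁, n₂, m₁, m₂ ≤ q with q = max{n₁,n₂,m₁,m₂}. Define A = [D^(q−n₁), D^(q−m₁)] and B = [D^(q−n₂), D^(q−m₂)] (horizontal concatenations). If n₁ ≤ m₁ and n₂ > m₂, then rank([A;B]) = max{n₁,m₁} + max{n₂,m₂}, and hence rank([A;B]) − rank(B) = max{n₁,m₁} = m₁ ≥ n₁. -/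
open Matrix

/-- The down-shift matrix over GF(2). -/
def downShift (q : ℕ) : Matrix (Fin q) (Fin q) (ZMod 2) :=
  Matrix.of fun j k => if (j : ℕ) = (k : ℕ) + 1 then 1 else 0

/-- generic shift matrix: entry (i,j) is 1 iff i + e = j + d. -/
def sh (a b d e : ℕ) : Matrix (Fin a) (Fin b) (ZMod 2) :=
  Matrix.of fun i j => if (i : ℕ) + e = (j : ℕ) + d then 1 else 0

lemma sh_mul (a b c d e f g : ℕ) (h₁ : g ≤ f) (h₂ : a + e ≤ b + d) :
    sh a b d e * sh b c f g = sh a c (d + f) (e + g) := by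
  ext i k
  simp only [sh, Matrix.mul_apply, Matrix.of_apply]
  by_cases h : (i : ℕ) + (e + g) = (k : ℕ) + (d + f)
  · have hd : d ≤ (i : ℕ) + e := by omega
    have hb : (i : ℕ) + e - d < b := by omega
    rw [Finset.sum_eq_single_of_mem (⟨(i : ℕ) + e - d, hb⟩ : Fin b) (Finset.mem_univ _)]
    · rw [if_pos h, if_pos (show (i : ℕ) + e = ((i : ℕ) + e - d) + d by omega),
        if_pos (show ((i : ℕ) + e - d) + g = (k : ℕ) + f by omega), one_mul]
    · intro l _ hl
      by_cases hc : (i : ℕ) + e = (l : ℕ) + d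
      · exact absurd (Fin.ext (show (l : ℕ) = (i : ℕ) + e - d by omega)) hl
      · rw [if_neg hc, zero_mul]
  · rw [if_neg h]
    apply Finset.sum_eq_zero
    intro l _
    by_cases hc : (i : ℕ) + e = (l : ℕ) + d
    · rw [if_neg (show ¬((l : ℕ) + g = (k : ℕ) + f) by omega), mul_zero]
    · rw [if_neg hc, zero_mul]

lemma sh_one (a d : ℕ) : sh a a d d = 1 := by
  ext i j
  simp only [sh, Matrix.of_apply, Matrix.one_apply]
  exact if_congr (by rw [Fin.ext_iff]; omega) rfl rfl

lemma downShift_pow (q p : ℕ) : downShift q ^ p = sh q q p 0 := by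
  induction p with
  | zero => rw [pow_zero, ← sh_one q 0]
  | succ p ih =>
    have hd : downShift q = sh q q 1 0 := by
      ext i j; simp [downShift, sh]
    rw [pow_succ, ih, hd, sh_mul q q q p 0 1 0 (by omega) (by omega)]

lemma rank_downShift_pow (q p : ℕ) (hp : p ≤ q) : (downShift q ^ p).rank = q - p := by
  rw [downShift_pow]
  have hPQ : sh q q p 0 = sh q (q - p) p 0 * sh (q - p) q 0 0 := by
    have := sh_mul q (q - p) q p 0 0 0 le_rfl (by omega)
    simpa using this.symm
  have hLT : sh (q - p) q 0 p * sh q q p 0 * sh q (q - p) 0 0 = 1 := by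
    rw [sh_mul (q - p) q q 0 p p 0 (by omega) (by omega),
      sh_mul (q - p) q (q - p) (0 + p) (p + 0) 0 0 le_rfl (by omega)]
    simpa using sh_one (q - p) p
  apply le_antisymm
  · rw [hPQ]
    exact (Matrix.rank_mul_le_left _ _).trans
      ((Matrix.rank_le_card_width _).trans (by simp))
  · calc q - p = (1 : Matrix (Fin (q - p)) (Fin (q - p)) (ZMod 2)).rank := by simp
      _ = (sh (q - p) q 0 p * sh q q p 0 * sh q (q - p) 0 0).rank := by rw [hLT]
      _ ≤ (sh (q - p) q 0 p * sh q q p 0).rank := Matrix.rank_mul_le_left _ _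
      _ ≤ (sh q q p 0).rank := Matrix.rank_mul_le_right _ _

lemma my_rank_add_le {m n : Type*} [Fintype n] [Fintype m] (A B : Matrix m n (ZMod 2)) :
    (A + B).rank ≤ A.rank + B.rank := by
  rw [Matrix.rank, Matrix.rank, Matrix.rank, Matrix.mulVecLin_add]
  have h : LinearMap.range (A.mulVecLin + B.mulVecLin) ≤
      LinearMap.range A.mulVecLin ⊔ LinearMap.range B.mulVecLin := by
    rintro x ⟨y, rfl⟩
    exact Submodule.add_mem_sup ⟨y, rfl⟩ ⟨y, rfl⟩
  exact (Submodule.finrank_mono h).trans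
    (Submodule.finrank_add_le_finrank_add_finrank _ _)

lemma rank_fromRows_zero_right {m₁ m₂ n : Type*} [Fintype n] [Fintype m₁] [Fintype m₂]
    [DecidableEq m₁] [DecidableEq n]
    (A : Matrix m₁ n (ZMod 2)) :
    (Matrix.fromRows A (0 : Matrix m₂ n (ZMod 2))).rank = A.rank := by
  apply le_antisymm
  · have : Matrix.fromRows A (0 : Matrix m₂ n (ZMod 2)) =
        Matrix.fromRows (1 : Matrix m₁ m₁ (ZMod 2)) (0 : Matrix m₂ m₁ (ZMod 2)) * A := by
      rw [Matrix.fromRows_mul, Matrix.one_mul, Matrix.zero_mul]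
    rw [this]
    exact Matrix.rank_mul_le_right _ _
  · have : A = Matrix.fromCols (1 : Matrix m₁ m₁ (ZMod 2)) (0 : Matrix m₁ m₂ (ZMod 2)) *
        Matrix.fromRows A (0 : Matrix m₂ n (ZMod 2)) := by
      rw [Matrix.fromCols_mul_fromRows, Matrix.one_mul, Matrix.zero_mul, add_zero]
    conv_lhs => rw [this]
    exact Matrix.rank_mul_le_right _ _

lemma rank_fromRows_zero_left {m₁ m₂ n : Type*} [Fintype n] [Fintype m₁] [Fintype m₂]
    [DecidableEq m₂] [DecidableEq n]
    (B : Matrix m₂ n (ZMod 2)) :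
    (Matrix.fromRows (0 : Matrix m₁ n (ZMod 2)) B).rank = B.rank := by
  apply le_antisymm
  · have : Matrix.fromRows (0 : Matrix m₁ n (ZMod 2)) B =
        Matrix.fromRows (0 : Matrix m₁ m₂ (ZMod 2)) (1 : Matrix m₂ m₂ (ZMod 2)) * B := by
      rw [Matrix.fromRows_mul, Matrix.one_mul, Matrix.zero_mul]
    rw [this]
    exact Matrix.rank_mul_le_right _ _
  · have : B = Matrix.fromCols (0 : Matrix m₂ m₁ (ZMod 2)) (1 : Matrix m₂ m₂ (ZMod 2)) *
        Matrix.fromRows (0 : Matrix m₁ n (ZMod 2)) B := by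
      rw [Matrix.fromCols_mul_fromRows, Matrix.one_mul, Matrix.zero_mul, zero_add]
    conv_lhs => rw [this]
    exact Matrix.rank_mul_le_right _ _

lemma my_rank_submatrix_le {k l m n : Type*} [Fintype k] [Fintype l] [Fintype m] [Fintype n]
    [DecidableEq m] [DecidableEq n]
    (A : Matrix m n (ZMod 2)) (f : k → m) (g : l → n) :
    (A.submatrix f g).rank ≤ A.rank := by
  have : A.submatrix f g =
      (Matrix.of fun i j => if f i = j then (1 : ZMod 2) else 0) * A *
        (Matrix.of fun j i => if j = g i then (1 : ZMod 2) else 0) := by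
    ext i i'
    simp [Matrix.mul_apply, Finset.sum_mul, ite_mul, mul_ite,
      Finset.sum_ite_eq, Finset.sum_ite_eq']
  rw [this]
  exact (Matrix.rank_mul_le_left _ _).trans (Matrix.rank_mul_le_right _ _)

/-- if n₁ ≤ m₁ and n₂ > m₂, then rank [A;B] = max n₁ m₁ + max n₂ m₂,
and rank [A;B] − rank B = m₁. -/
theorem stmt_6 (q n₁ n₂ m₁ m₂ : ℕ)
    (hq : q = max (max n₁ n₂) (max m₁ m₂))
    (h₁ : n₁ ≤ m₁) (h₂ : m₂ < n₂) :
    (Matrix.fromRows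
        (Matrix.fromCols ((downShift q) ^ (q - n₁)) ((downShift q) ^ (q - m₁)))
        (Matrix.fromCols ((downShift q) ^ (q - n₂)) ((downShift q) ^ (q - m₂)))).rank
      = max n₁ m₁ + max n₂ m₂ ∧
    (Matrix.fromRows
        (Matrix.fromCols ((downShift q) ^ (q - n₁)) ((downShift q) ^ (q - m₁)))
        (Matrix.fromCols ((downShift q) ^ (q - n₂)) ((downShift q) ^ (q - m₂)))).rank
      - (Matrix.fromCols ((downShift q) ^ (q - n₂)) ((downShift q) ^ (q - m₂))).rank
      = m₁ := by
  have hn₁ : n₁ ≤ q := by omega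
  have hn₂ : n₂ ≤ q := by omega
  have hm₁ : m₁ ≤ q := by omega
  have hm₂ : m₂ ≤ q := by omega
  set A : Matrix (Fin q) (Fin q ⊕ Fin q) (ZMod 2) :=
    Matrix.fromCols ((downShift q) ^ (q - n₁)) ((downShift q) ^ (q - m₁)) with hAdef
  set B : Matrix (Fin q) (Fin q ⊕ Fin q) (ZMod 2) :=
    Matrix.fromCols ((downShift q) ^ (q - n₂)) ((downShift q) ^ (q - m₂)) with hBdef
  set M : Matrix (Fin q ⊕ Fin q) (Fin q ⊕ Fin q) (ZMod 2) := Matrix.fromRows A B with hMdef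
  have epow : ∀ x y : ℕ, x ≤ y → y ≤ q →
      downShift q ^ (q - x) = downShift q ^ (q - y) * downShift q ^ (y - x) := by
    intro x y hxy hyq
    rw [← pow_add]
    congr 1
    omega
  -- rank of B
  have eB : B = downShift q ^ (q - n₂) * Matrix.fromCols 1 (downShift q ^ (n₂ - m₂)) := by
    rw [Matrix.mul_fromCols, Matrix.mul_one, ← epow m₂ n₂ h₂.le hn₂]
  have hBle : B.rank ≤ n₂ := by
    rw [eB]
    refine (Matrix.rank_mul_le_left _ _).trans ?_
    rw [rank_downShift_pow q _ (by omega)]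
    omega
  have eDu : downShift q ^ (q - n₂) = @HMul.hMul _ _ (Matrix (Fin q) (Fin q) (ZMod 2))
      Matrix.instHMulOfFintypeOfMulOfAddCommMonoid B (Matrix.fromRows (1 : Matrix (Fin q) (Fin q) (ZMod 2)) 0) := by
    rw [hBdef, Matrix.fromCols_mul_fromRows, Matrix.mul_one, Matrix.mul_zero, add_zero]
  have hBge : n₂ ≤ B.rank := by
    have h := rank_downShift_pow q (q - n₂) (by omega)
    rw [eDu] at h
    have h' := Matrix.rank_mul_le_left B (Matrix.fromRows (1 : Matrix (Fin q) (Fin q) (ZMod 2)) 0)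
    omega
  have hrB : B.rank = n₂ := le_antisymm hBle hBge
  -- rank of A
  have eA : A = downShift q ^ (q - m₁) * Matrix.fromCols (downShift q ^ (m₁ - n₁)) 1 := by
    rw [Matrix.mul_fromCols, Matrix.mul_one, ← epow n₁ m₁ h₁ hm₁]
  have hAle : A.rank ≤ m₁ := by
    rw [eA]
    refine (Matrix.rank_mul_le_left _ _).trans ?_
    rw [rank_downShift_pow q _ (by omega)]
    omega
  -- upper bound
  have hsplit : M = Matrix.fromRows A 0 + Matrix.fromRows 0 B := by
    ext (i | i) j <;> simp [hMdef, Matrix.fromRows_apply_inl, Matrix.fromRows_apply_inr]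
  have hup : M.rank ≤ m₁ + n₂ := by
    rw [hsplit]
    calc (Matrix.fromRows A 0 + Matrix.fromRows 0 B).rank
        ≤ (Matrix.fromRows A (0 : Matrix (Fin q) (Fin q ⊕ Fin q) (ZMod 2))).rank
          + (Matrix.fromRows (0 : Matrix (Fin q) (Fin q ⊕ Fin q) (ZMod 2)) B).rank :=
          my_rank_add_le _ _
      _ = A.rank + B.rank := by rw [rank_fromRows_zero_right, rank_fromRows_zero_left]
      _ ≤ m₁ + n₂ := add_le_add hAle hBle
  -- lower bound via submatrix
  set f : Fin n₂ ⊕ Fin m₁ → Fin q ⊕ Fin q :=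
    Sum.elim (fun c => Sum.inr ⟨q - n₂ + (c : ℕ), by omega⟩)
      (fun a => Sum.inl ⟨q - m₁ + (a : ℕ), by omega⟩) with hfdef
  set g : Fin n₂ ⊕ Fin m₁ → Fin q ⊕ Fin q :=
    Sum.elim (fun b => Sum.inl ⟨(b : ℕ), by omega⟩)
      (fun d => Sum.inr ⟨(d : ℕ), by omega⟩) with hgdef
  set X : Matrix (Fin m₁) (Fin n₂) (ZMod 2) :=
    Matrix.of fun a b => if (a : ℕ) + n₁ = (b : ℕ) + m₁ then 1 else 0 with hXdef
  set Y : Matrix (Fin n₂) (Fin m₁) (ZMod 2) :=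
    Matrix.of fun c d => if (c : ℕ) + m₂ = (d : ℕ) + n₂ then 1 else 0 with hYdef
  have hsub : M.submatrix f g = Matrix.fromBlocks 1 Y X 1 := by
    ext (c | a) (b | d) <;>
      simp only [Matrix.submatrix_apply, hfdef, hgdef, hMdef, hAdef, hBdef, hXdef, hYdef,
        Sum.elim_inl, Sum.elim_inr, Matrix.fromRows_apply_inl, Matrix.fromRows_apply_inr,
        Matrix.fromCols_apply_inl, Matrix.fromCols_apply_inr,
        Matrix.fromBlocks_apply₁₁, Matrix.fromBlocks_apply₁₂,
        Matrix.fromBlocks_apply₂₁, Matrix.fromBlocks_apply₂₂,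
        downShift_pow, sh, Matrix.of_apply, Matrix.one_apply] <;>
      refine if_congr ?_ rfl rfl
    · rw [Fin.ext_iff]; omega
    · omega
    · omega
    · rw [Fin.ext_iff]; omega
  have hXY0 : ∀ a d : Fin m₁, (a : ℕ) ≤ (d : ℕ) → (X * Y) a d = 0 := by
    intro a d had
    simp only [Matrix.mul_apply, hXdef, hYdef, Matrix.of_apply]
    apply Finset.sum_eq_zero
    intro b _
    by_cases hc : (a : ℕ) + n₁ = (b : ℕ) + m₁
    · rw [if_neg (show ¬((b : ℕ) + m₂ = (d : ℕ) + n₂) by omega), mul_zero]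
    · rw [if_neg hc, zero_mul]
  have htri : (1 - X * Y).BlockTriangular OrderDual.toDual := by
    intro i j hij
    have hij' : (i : ℕ) < (j : ℕ) := hij
    rw [Matrix.sub_apply, Matrix.one_apply_ne (by exact fun h => by subst h; omega),
      hXY0 i j hij'.le, sub_zero]
  have hdet : (Matrix.fromBlocks (1 : Matrix (Fin n₂) (Fin n₂) (ZMod 2)) Y X 1).det = 1 := by
    rw [Matrix.det_fromBlocks_one₁₁, Matrix.det_of_lowerTriangular _ htri]
    apply Finset.prod_eq_one
    intro i _
    rw [Matrix.sub_apply, Matrix.one_apply_eq, hXY0 i i le_rfl, sub_zero]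
  have hunit : IsUnit (Matrix.fromBlocks (1 : Matrix (Fin n₂) (Fin n₂) (ZMod 2)) Y X 1) :=
    (Matrix.isUnit_iff_isUnit_det _).mpr (by rw [hdet]; exact isUnit_one)
  have hlow : n₂ + m₁ ≤ M.rank := by
    have h1 : (M.submatrix f g).rank = n₂ + m₁ := by
      rw [hsub, Matrix.rank_of_isUnit _ hunit]
      simp
    have h2 := my_rank_submatrix_le M f g
    omega
  have hM : M.rank = m₁ + n₂ := le_antisymm hup (by omega)
  refine ⟨?_, ?_⟩
  · rw [max_eq_right h₁, max_eq_left h₂.le]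
    exact hM
  · rw [hM, hrB]
    omega
end

section
/- For all real h₁, g₁ with h₁² + g₁² > 0 and all real β with 0 ≤ β² ≤ 1: (1/2)·log₂((2(h₁²+g₁²)+1)/(2β²(h₁²+g₁²)+1)) − (1/2)·log₂((1+h₁²+g₁²)/(1+β²(h₁²+g₁²))) ≤ 1/2. -/
lemma two_mul_add_one_div_le_two_mul_one_add_div {x y : ℝ} (hx : 0 ≤ x) (hy : 0 ≤ y) :
    (2 * x + 1) / (2 * y + 1) ≤ 2 * ((1 + x) / (1 + y)) := by
  rw [mul_div_assoc' 2, div_le_div_iff₀ (by positivity) (by positivity)]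
  -- after cross-multiplying, the right side exceeds the left by 1 + 3y + 2xy
  nlinarith [mul_nonneg hx hy]

lemma logb_two_mul_add_one_div_sub_logb_one_add_div_le_one {x y : ℝ} (hx : 0 ≤ x)
    (hy : 0 ≤ y) :
    Real.logb 2 ((2 * x + 1) / (2 * y + 1)) - Real.logb 2 ((1 + x) / (1 + y)) ≤ 1 := by
  have hmono : Real.logb 2 ((2 * x + 1) / (2 * y + 1)) ≤ Real.logb 2 (2 * ((1 + x) / (1 + y))) :=
    Real.logb_le_logb_of_le (by norm_num) (by positivity)
      (two_mul_add_one_div_le_two_mul_one_add_div hx hy)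
  rw [Real.logb_mul (by norm_num) (by positivity), Real.logb_self_eq_one (by norm_num)] at hmono
  linarith

theorem stmt_9_general (h₁ g₁ β : ℝ) :
    (1/2) * Real.logb 2 ((2*(h₁^2 + g₁^2) + 1) / (2*β^2*(h₁^2 + g₁^2) + 1))
      - (1/2) * Real.logb 2 ((1 + h₁^2 + g₁^2) / (1 + β^2*(h₁^2 + g₁^2))) ≤ 1/2 := by
  have h := logb_two_mul_add_one_div_sub_logb_one_add_div_le_one
    (by positivity : 0 ≤ h₁^2 + g₁^2) (by positivity : 0 ≤ β^2 * (h₁^2 + g₁^2))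
  rw [← mul_assoc, ← add_assoc] at h
  linarith

theorem stmt_9 (h₁ g₁ β : ℝ) (hpos : h₁^2 + g₁^2 > 0) (hβ : β^2 ≤ 1) :
    (1/2) * Real.logb 2 ((2*(h₁^2 + g₁^2) + 1) / (2*β^2*(h₁^2 + g₁^2) + 1))
      - (1/2) * Real.logb 2 ((1 + h₁^2 + g₁^2) / (1 + β^2*(h₁^2 + g₁^2))) ≤ 1/2 :=
  stmt_9_general h₁ g₁ β
end

section
/- For all real h₁ with h₁² ≥ 1 and all real g₁: (1/2)·log₂(1+h₁²) − (1/2)·log₂((1+h₁²+g₁²)·h₁²/(h₁²+g₁²)) ≤ 1/2. -/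
/-! The ratio of the two arguments is at most 2, because
`2 (1 + a + c) a - (1 + a) (a + c) = a + a² + c (a - 1) ≥ 0` for `a = h₁² ≥ 1` and `c = g₁² ≥ 0`;
the difference of the base-2 logarithms is therefore at most 1. -/

theorem Real.logb_sub_logb_le_one {b x y : ℝ} (hb : 1 < b) (hx : 0 < x) (hxy : x ≤ b * y) :
    Real.logb b x - Real.logb b y ≤ 1 := by
  have hy : 0 < y := pos_of_mul_pos_right (hx.trans_le hxy) (by linarith)
  calc Real.logb b x - Real.logb b y
      ≤ Real.logb b (b * y) - Real.logb b y := by gcongr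
    _ = 1 := by
      rw [Real.logb_mul (by positivity) hy.ne', Real.logb_self_eq_one hb]
      ring

theorem one_add_le_two_mul_div {a c : ℝ} (ha : 1 ≤ a) (hc : 0 ≤ c) :
    1 + a ≤ 2 * ((1 + a + c) * a / (a + c)) := by
  rw [← mul_div_assoc, le_div_iff₀ (by positivity)]
  nlinarith [mul_nonneg hc (sub_nonneg.mpr ha)]

theorem stmt_10 (h₁ g₁ : ℝ) (hh : h₁^2 ≥ 1) :
    (1/2) * Real.logb 2 (1 + h₁^2)
      - (1/2) * Real.logb 2 ((1 + h₁^2 + g₁^2) * h₁^2 / (h₁^2 + g₁^2)) ≤ 1/2 := by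
  have := Real.logb_sub_logb_le_one one_lt_two (by positivity)
    (one_add_le_two_mul_div hh (sq_nonneg g₁))
  linarith
end

section
/- Let h₁, g₁ be real numbers and 0 ≤ β² ≤ 1. Define a = (1/2)log₂(1+h₁²), b = (1/2)log₂((2(h₁²+g₁²)+1)/(2β²(h₁²+g₁²)+1)), c = (1/2)log₂((1+h₁²+g₁²)h₁²/(h₁²+g₁²)), d = (1/2)log₂((1+h₁²+g₁²)/(1+β²(h₁²+g₁²))). Assume h₁ ≠ 0 (so h₁²+g₁² > 0). Then min{a, b} − max(0, min{c, d}) ≤ 1/2. -/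
/-!
For `h₁² ≤ 1` the upper bound `a` is itself at most half a bit. For `h₁² ≥ 1` the arguments of
the logarithms in `a` and `b` are at most twice those in `c` and `d` respectively, so `a ≤ c + 1/2`
and `b ≤ d + 1/2`, whence `min a b ≤ min c d + 1/2`.
-/

open Real

lemma Real.logb_le_one_add_logb_of_le_mul {b x y : ℝ} (hb : 1 < b) (hx : 0 < x)
    (hxy : x ≤ b * y) : logb b x ≤ 1 + logb b y := by
  have hy : 0 < y := pos_of_mul_pos_right (hx.trans_le hxy) (by linarith)
  calc logb b x ≤ logb b (b * y) := logb_le_logb_of_le hb hx hxy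
    _ = 1 + logb b y := by
      rw [logb_mul (by positivity) hy.ne', logb_self_eq_one hb]

lemma half_logb_two_le_add_half {x y : ℝ} (hx : 0 < x) (hxy : x ≤ 2 * y) :
    1 / 2 * logb 2 x ≤ 1 / 2 * logb 2 y + 1 / 2 := by
  linarith [logb_le_one_add_logb_of_le_mul one_lt_two hx hxy]

lemma min_le_max_zero_min_add {a b c d k : ℝ} (hac : a ≤ c + k) (hbd : b ≤ d + k) :
    min a b ≤ max 0 (min c d) + k :=
  calc min a b ≤ min (c + k) (d + k) := min_le_min hac hbd
    _ = min c d + k := min_add_add_right c d k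
    _ ≤ max 0 (min c d) + k := by gcongr; exact le_max_right _ _

lemma one_add_le_two_mul_mul_div {x y : ℝ} (hx : 1 ≤ x) (hy : 0 ≤ y) :
    1 + x ≤ 2 * ((1 + x + y) * x / (x + y)) := by
  rw [mul_div_assoc', le_div_iff₀ (by linarith)]
  nlinarith [mul_nonneg hy (by linarith : (0 : ℝ) ≤ x - 1)]

lemma div_le_two_mul_div {x y s : ℝ} (hx : 0 ≤ x) (hy : 0 ≤ y) (hs : 0 ≤ s) :
    (2 * (x + y) + 1) / (2 * s * (x + y) + 1) ≤ 2 * ((1 + x + y) / (1 + s * (x + y))) := by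
  rw [mul_div_assoc', div_le_div_iff₀ (by positivity) (by positivity)]
  nlinarith [mul_nonneg hs (add_nonneg hx hy), mul_nonneg hs (sq_nonneg (x + y))]

theorem stmt_12_general (h₁ g₁ β : ℝ) :
    min ((1/2) * Real.logb 2 (1 + h₁^2))
        ((1/2) * Real.logb 2 ((2*(h₁^2 + g₁^2) + 1) / (2*β^2*(h₁^2 + g₁^2) + 1)))
      - max 0 (min ((1/2) * Real.logb 2 ((1 + h₁^2 + g₁^2) * h₁^2 / (h₁^2 + g₁^2)))
               ((1/2) * Real.logb 2 ((1 + h₁^2 + g₁^2) / (1 + β^2*(h₁^2 + g₁^2)))))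
      ≤ 1/2 := by
  rw [sub_le_iff_le_add']
  rcases le_or_gt (h₁ ^ 2) 1 with hsmall | hlarge
  · have ha : 1 / 2 * logb 2 (1 + h₁ ^ 2) ≤ 1 / 2 := by
      simpa using half_logb_two_le_add_half (y := 1) (by positivity) (by linarith)
    exact (min_le_left _ _).trans (ha.trans (le_add_of_nonneg_left (le_max_left _ _)))
  · have hac := half_logb_two_le_add_half (by positivity)
      (one_add_le_two_mul_mul_div hlarge.le (sq_nonneg g₁))
    have hbd := half_logb_two_le_add_half (by positivity)
      (div_le_two_mul_div (sq_nonneg h₁) (sq_nonneg g₁) (sq_nonneg β))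
    exact min_le_max_zero_min_add hac hbd

theorem stmt_12 (h₁ g₁ β : ℝ) (hβ : β^2 ≤ 1) (hh : h₁ ≠ 0) :
    min ((1/2) * Real.logb 2 (1 + h₁^2))
        ((1/2) * Real.logb 2 ((2*(h₁^2 + g₁^2) + 1) / (2*β^2*(h₁^2 + g₁^2) + 1)))
      - max 0 (min ((1/2) * Real.logb 2 ((1 + h₁^2 + g₁^2) * h₁^2 / (h₁^2 + g₁^2)))
               ((1/2) * Real.logb 2 ((1 + h₁^2 + g₁^2) / (1 + β^2*(h₁^2 + g₁^2)))))
      ≤ 1/2 :=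
  stmt_12_general h₁ g₁ β
end
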